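/- Let α,β>0, γ,δ≥0, 0≤q<1, define a,b,c,d via φ±, and assume ab<1. Then the Enaud–Derrida matrices D,E and vectors W,V satisfy the DEHP algebra entrywise: (i) for all i,j≥0, ∑_k (D_{ik}E_{kj} − q E_{ik}D_{kj}) = D_{ij} + E_{ij}; (ii) for all j≥0, ∑_i W_i (αE_{ij} − γD_{ij}) = W_j; (iii) for all i≥0, ∑_j (βD_{ij} − δE_{ij}) V_j = V_i. (All sums have only finitely many nonzero terms since D and E are banded.) -/

import Mathlib

/-- `φ₊(x,y) = (1/(2x))(1-q-x+y + √((1-q-x+y)² + 4xy))`. -/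
noncomputable def phiPlus (q x y : ℝ) : ℝ :=
  (1 / (2 * x)) * (1 - q - x + y + Real.sqrt ((1 - q - x + y) ^ 2 + 4 * x * y))

/-- `φ₋(x,y) = (1/(2x))(1-q-x+y - √((1-q-x+y)² + 4xy))`. -/
noncomputable def phiMinus (q x y : ℝ) : ℝ :=
  (1 / (2 * x)) * (1 - q - x + y - Real.sqrt ((1 - q - x + y) ^ 2 + 4 * x * y))

/-- The finite q-Pochhammer symbol `(z;q)_n = ∏_{j=0}^{n-1} (1 - z qʲ)`. -/
noncomputable def qPoch (z q : ℝ) (n : ℕ) : ℝ := ∏ j ∈ Finset.range n, (1 - z * q ^ j)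

/-- The Enaud–Derrida matrix `D` (entries indexed by `ℤ≥0 × ℤ≥0`). -/
noncomputable def EDmatD (q d : ℝ) (i j : ℕ) : ℝ :=
  if j = i then (1 + d * q ^ i) / (1 - q)
  else if j = i + 1 then (1 - q ^ (i + 1)) / (1 - q)
  else 0

/-- The Enaud–Derrida matrix `E` (entries indexed by `ℤ≥0 × ℤ≥0`). -/
noncomputable def EDmatE (q c d : ℝ) (i j : ℕ) : ℝ :=
  if j = i then (1 + c * q ^ i) / (1 - q)
  else if i = j + 1 then (1 - c * d * q ^ j) / (1 - q)
  else 0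

/-- The Enaud–Derrida row vector `W`, `W_i = aⁱ`. -/
noncomputable def EDvecW (a : ℝ) (i : ℕ) : ℝ := a ^ i

/-- The Enaud–Derrida column vector `V`, `V_i = bⁱ (cd;q)_i/(q;q)_i`. -/
noncomputable def EDvecV (b c d q : ℝ) (i : ℕ) : ℝ := b ^ i * qPoch (c * d) q i / qPoch q q i

/-!
`a, c` are the two roots of `α t² - (1 - q - α + γ) t - γ`, so Vieta gives `α a c = -γ` and
`α (1 + a) (1 + c) = 1 - q`; likewise for `b, d` with `β, δ`. Since `D` is upper and `E` lower
bidiagonal, every sum in the statement has at most three nonzero terms, and each identity becomes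
a rational identity in `q ^ i` that follows from these relations, together with the recursion
`(1 - q ^ (n + 1)) V_{n+1} = b (1 - c d q ^ n) V_n` for `V`.
-/

section PhiIdentities

variable (q x y : ℝ)

private lemma sqrt_discriminant_sq (hxy : 0 ≤ x * y) :
    Real.sqrt ((1 - q - x + y) ^ 2 + 4 * x * y) ^ 2 = (1 - q - x + y) ^ 2 + 4 * x * y :=
  Real.sq_sqrt (by nlinarith [sq_nonneg (1 - q - x + y)])

lemma mul_phiPlus_mul_phiMinus (hx : x ≠ 0) (hxy : 0 ≤ x * y) :
    x * phiPlus q x y * phiMinus q x y = -y := by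
  have hs := sqrt_discriminant_sq q x y hxy
  unfold phiPlus phiMinus
  generalize Real.sqrt ((1 - q - x + y) ^ 2 + 4 * x * y) = s at hs ⊢
  field_simp
  linear_combination -hs

lemma mul_one_add_phiPlus_mul_one_add_phiMinus (hx : x ≠ 0) (hxy : 0 ≤ x * y) :
    x * (1 + phiPlus q x y) * (1 + phiMinus q x y) = 1 - q := by
  have hs := sqrt_discriminant_sq q x y hxy
  unfold phiPlus phiMinus
  generalize Real.sqrt ((1 - q - x + y) ^ 2 + 4 * x * y) = s at hs ⊢
  field_simp
  linear_combination -hs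

end PhiIdentities

section FiniteSupport

variable {ι M : Type*} [DecidableEq ι] [AddCommMonoid M] [TopologicalSpace M] {f : ι → M}

lemma tsum_eq_add_of_eq_zero {i j : ι} (hij : i ≠ j) (hf : ∀ k, k ≠ i → k ≠ j → f k = 0) :
    ∑' k, f k = f i + f j := by
  rw [tsum_eq_sum (s := {i, j}) (by simpa using hf), Finset.sum_pair hij]

lemma tsum_eq_add_add_of_eq_zero {i j l : ι} (hij : i ≠ j) (hil : i ≠ l) (hjl : j ≠ l)
    (hf : ∀ k, k ≠ i → k ≠ j → k ≠ l → f k = 0) :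
    ∑' k, f k = f i + f j + f l := by
  rw [tsum_eq_sum (s := {i, j, l}) (by simpa using hf), Finset.sum_insert (by simp [hij, hil]),
    Finset.sum_pair hjl, add_assoc]

end FiniteSupport

section EnaudDerrida

variable {q c d : ℝ} {i j : ℕ}

lemma EDmatD_of_eq (h : j = i) : EDmatD q d i j = (1 + d * q ^ i) / (1 - q) := if_pos h

lemma EDmatD_of_eq_add_one (h : j = i + 1) : EDmatD q d i j = (1 - q ^ (i + 1)) / (1 - q) := by
  simp [EDmatD, h]

lemma EDmatD_of_ne (h : j ≠ i) (h' : j ≠ i + 1) : EDmatD q d i j = 0 := by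
  simp [EDmatD, h, h']

lemma EDmatE_of_eq (h : j = i) : EDmatE q c d i j = (1 + c * q ^ i) / (1 - q) := if_pos h

lemma EDmatE_of_eq_add_one (h : i = j + 1) : EDmatE q c d i j = (1 - c * d * q ^ j) / (1 - q) := by
  simp [EDmatE, h]

lemma EDmatE_of_ne (h : j ≠ i) (h' : i ≠ j + 1) : EDmatE q c d i j = 0 := by
  simp [EDmatE, h, h']

lemma tsum_EDmatD_mul_EDmatE_sub (hq : q ≠ 1) (i j : ℕ) :
    ∑' k, (EDmatD q d i k * EDmatE q c d k j - q * (EDmatE q c d i k * EDmatD q d k j)) =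
      EDmatD q d i j + EDmatE q c d i j := by
  have h1q : 1 - q ≠ 0 := sub_ne_zero.mpr hq.symm
  rcases i with _ | m
  · rw [tsum_eq_add_of_eq_zero zero_ne_one fun k h0 h1 => by
      rw [EDmatD_of_ne h0 h1, EDmatE_of_ne h0 (by omega)]; ring]
    obtain rfl | rfl | ⟨h0, h1⟩ : j = 0 ∨ j = 1 ∨ (j ≠ 0 ∧ j ≠ 1) := by omega
    all_goals simp (disch := omega) only [EDmatD_of_eq, EDmatD_of_eq_add_one, EDmatD_of_ne,
      EDmatE_of_eq, EDmatE_of_eq_add_one, EDmatE_of_ne]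
    all_goals field_simp
    all_goals ring
  · rw [tsum_eq_add_add_of_eq_zero (i := m) (j := m + 1) (l := m + 2) (by omega) (by omega)
      (by omega) fun k h0 h1 h2 => by
        rw [EDmatD_of_ne h1 (by omega), EDmatE_of_ne h1 (by omega)]; ring]
    obtain rfl | rfl | rfl | ⟨h0, h1, h2⟩ :
        j = m ∨ j = m + 1 ∨ j = m + 2 ∨ (j ≠ m ∧ j ≠ m + 1 ∧ j ≠ m + 2) := by omega
    all_goals simp (disch := omega) only [EDmatD_of_eq, EDmatD_of_eq_add_one, EDmatD_of_ne,
      EDmatE_of_eq, EDmatE_of_eq_add_one, EDmatE_of_ne]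
    all_goals field_simp
    all_goals ring

lemma tsum_EDvecW_mul_sub (hq : q ≠ 1) {α γ a : ℝ} (hγ : α * a * c = -γ)
    (hK : α * (1 + a) * (1 + c) = 1 - q) (j : ℕ) :
    ∑' i, EDvecW a i * (α * EDmatE q c d i j - γ * EDmatD q d i j) = EDvecW a j := by
  have h1q : 1 - q ≠ 0 := sub_ne_zero.mpr hq.symm
  obtain rfl : γ = -(α * a * c) := by linarith
  rcases j with _ | n
  · rw [tsum_eq_add_of_eq_zero zero_ne_one fun k h0 h1 => by
      rw [EDmatD_of_ne (Ne.symm h0) (by omega), EDmatE_of_ne (Ne.symm h0) (by omega)]; ring]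
    simp (disch := omega) only [EDmatD_of_eq, EDmatD_of_ne, EDmatE_of_eq, EDmatE_of_eq_add_one,
      EDvecW]
    field_simp
    linear_combination hK
  · rw [tsum_eq_add_add_of_eq_zero (i := n) (j := n + 1) (l := n + 2) (by omega) (by omega)
      (by omega) fun k h0 h1 h2 => by
        rw [EDmatD_of_ne (Ne.symm h1) (by omega), EDmatE_of_ne (Ne.symm h1) (by omega)]; ring]
    simp (disch := omega) only [EDmatD_of_eq, EDmatD_of_eq_add_one, EDmatD_of_ne,
      EDmatE_of_eq, EDmatE_of_eq_add_one, EDmatE_of_ne, EDvecW]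
    field_simp
    linear_combination a ^ (n + 1) * hK

lemma qPoch_self_ne_zero (hq : |q| < 1) (n : ℕ) : qPoch q q n ≠ 0 := by
  refine Finset.prod_ne_zero_iff.mpr fun k _ => sub_ne_zero.mpr fun h => ?_
  have : |q ^ (k + 1)| < 1 := by
    rw [abs_pow]; exact pow_lt_one₀ (abs_nonneg q) hq (Nat.succ_ne_zero k)
  rw [pow_succ', ← h, abs_one] at this
  exact lt_irrefl 1 this

lemma EDvecV_succ {b : ℝ} {n : ℕ} (h : qPoch q q (n + 1) ≠ 0) :
    (1 - q ^ (n + 1)) * EDvecV b c d q (n + 1) = b * (1 - c * d * q ^ n) * EDvecV b c d q n := by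
  have hQ : qPoch q q (n + 1) = qPoch q q n * (1 - q ^ (n + 1)) := by
    rw [qPoch, Finset.prod_range_succ, ← pow_succ', ← qPoch]
  have hP : qPoch (c * d) q (n + 1) = qPoch (c * d) q n * (1 - c * d * q ^ n) :=
    Finset.prod_range_succ _ _
  rw [hQ, mul_ne_zero_iff] at h
  rw [EDvecV, EDvecV, hQ, hP]
  field_simp [h.1, h.2]
  ring

lemma tsum_mul_sub_mul_EDvecV (hq : |q| < 1) {β δ b : ℝ} (hδ : β * b * d = -δ)
    (hK : β * (1 + b) * (1 + d) = 1 - q) (i : ℕ) :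
    ∑' j, (β * EDmatD q d i j - δ * EDmatE q c d i j) * EDvecV b c d q j = EDvecV b c d q i := by
  have h1q : 1 - q ≠ 0 := sub_ne_zero.mpr (abs_lt.mp hq).2.ne'
  have hV : ∀ n, (1 - q ^ (n + 1)) * EDvecV b c d q (n + 1) =
      b * (1 - c * d * q ^ n) * EDvecV b c d q n := fun n => EDvecV_succ (qPoch_self_ne_zero hq _)
  obtain rfl : δ = -(β * b * d) := by linarith
  rcases i with _ | m
  · rw [tsum_eq_add_of_eq_zero zero_ne_one fun k h0 h1 => by
      rw [EDmatD_of_ne h0 h1, EDmatE_of_ne h0 (by omega)]; ring]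
    simp (disch := omega) only [EDmatD_of_eq, EDmatD_of_eq_add_one, EDmatE_of_eq, EDmatE_of_ne]
    field_simp
    linear_combination β * hV 0 + EDvecV b c d q 0 * hK
  · rw [tsum_eq_add_add_of_eq_zero (i := m) (j := m + 1) (l := m + 2) (by omega) (by omega)
      (by omega) fun k h0 h1 h2 => by
        rw [EDmatD_of_ne h1 (by omega), EDmatE_of_ne h1 (by omega)]; ring]
    simp (disch := omega) only [EDmatD_of_eq, EDmatD_of_eq_add_one, EDmatD_of_ne,
      EDmatE_of_eq, EDmatE_of_eq_add_one, EDmatE_of_ne]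
    field_simp
    linear_combination β * hV (m + 1) - β * d * hV m + EDvecV b c d q (m + 1) * hK

end EnaudDerrida

theorem stmt4 (α β γ δ q : ℝ)
    (hα : 0 < α) (hβ : 0 < β) (hγ : 0 ≤ γ) (hδ : 0 ≤ δ) (hq0 : 0 ≤ q) (hq1 : q < 1)
    (a b c d : ℝ)
    (ha : a = phiPlus q α γ) (hb : b = phiPlus q β δ)
    (hc : c = phiMinus q α γ) (hd : d = phiMinus q β δ) :
    (∀ i j : ℕ,
      ∑' k : ℕ, (EDmatD q d i k * EDmatE q c d k j - q * (EDmatE q c d i k * EDmatD q d k j)) =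
        EDmatD q d i j + EDmatE q c d i j) ∧
    (∀ j : ℕ,
      ∑' i : ℕ, EDvecW a i * (α * EDmatE q c d i j - γ * EDmatD q d i j) = EDvecW a j) ∧
    (∀ i : ℕ,
      ∑' j : ℕ, (β * EDmatD q d i j - δ * EDmatE q c d i j) * EDvecV b c d q j =
        EDvecV b c d q i) := by
  have hαγ : 0 ≤ α * γ := mul_nonneg hα.le hγ
  have hβδ : 0 ≤ β * δ := mul_nonneg hβ.le hδ
  have hq : |q| < 1 := abs_lt.mpr ⟨by linarith, hq1⟩
  subst ha hb hc hd
  exact ⟨tsum_EDmatD_mul_EDmatE_sub hq1.ne,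
    tsum_EDvecW_mul_sub hq1.ne (mul_phiPlus_mul_phiMinus q α γ hα.ne' hαγ)
      (mul_one_add_phiPlus_mul_one_add_phiMinus q α γ hα.ne' hαγ),
    tsum_mul_sub_mul_EDvecV hq (mul_phiPlus_mul_phiMinus q β δ hβ.ne' hβδ)
      (mul_one_add_phiPlus_mul_one_add_phiMinus q β δ hβ.ne' hβδ)⟩
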